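/- arXiv:1612.05767 — 6 statements merged into one kernel-verified Lean document; each statement's English description precedes it below -/
import Mathlib

section
/- Consider a robot on a connected-over-time evolving ring that never changes its direction and that at every round moves one step in its direction whenever the corresponding edge is present. If all edges of the ring are recurrent (present infinitely often), then the robot visits every node infinitely often. -/
/-- A robot with a fixed direction `d ∈ {+1,-1}` on an evolving ring all of
whose edges are recurrent, moving one step in direction `d` whenever the corresponding
edge is present, visits every node infinitely often. -/
theorem stmt4 (n : ℕ) (hn : 1 ≤ n) (E : ℕ → ZMod n → Prop)
    (hrec : ∀ e : ZMod n, {t | E t e}.Infinite)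
    (d : ℤ) (hd : d = 1 ∨ d = -1)
    (p : ℕ → ZMod n)
    (hstep : ∀ t : ℕ,
      (E t (if d = 1 then p t else p t - 1) → p (t + 1) = p t + (d : ZMod n)) ∧
      (¬ E t (if d = 1 then p t else p t - 1) → p (t + 1) = p t)) :
    ∀ u : ZMod n, {t | p t = u}.Infinite := by
  intro u
  rcases eq_or_lt_of_le hn with h1 | h2
  · -- n = 1 : everything is trivially equal
    have hsub : Subsingleton (ZMod n) := by
      rw [← h1]; infer_instance
    have : {t | p t = u} = Set.univ := by
      ext t; simp [Subsingleton.elim (p t) u]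
    rw [this]; exact Set.infinite_univ
  · haveI : NeZero n := ⟨by omega⟩
    haveI : Fact (1 < n) := ⟨h2⟩
    have hd0 : (d : ZMod n) ≠ 0 := by
      rcases hd with h | h <;> subst h
      · simpa using (one_ne_zero : (1 : ZMod n) ≠ 0)
      · push_cast
        exact neg_ne_zero.mpr one_ne_zero
    -- the robot always eventually moves
    have hmove : ∀ t, ∃ t', t ≤ t' ∧ (∀ s, t ≤ s → s ≤ t' → p s = p t) ∧
        p (t' + 1) = p t' + (d : ZMod n) := by
      intro t
      by_cases hS : ∃ s, t ≤ s ∧ p (s + 1) ≠ p s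
      · set t' := Nat.find hS with ht'def
        obtain ⟨ht1, ht2⟩ := Nat.find_spec hS
        have hconst : ∀ s, t ≤ s → s ≤ t' → p s = p t := by
          intro s hts hst'
          induction s with
          | zero =>
            have : t = 0 := Nat.le_zero.mp hts
            rw [this]
          | succ s ih =>
            rcases Nat.lt_or_ge t (s + 1) with h | h
            · have hts' : t ≤ s := Nat.lt_succ_iff.mp h
              have hmin := Nat.find_min hS (lt_of_lt_of_le (Nat.lt_succ_self s) hst')
              push_neg at hmin
              have heq : p (s + 1) = p s := hmin hts'
              rw [heq, ih hts' (le_trans (Nat.le_succ s) hst')]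
            · have : t = s + 1 := le_antisymm hts h
              rw [this]
        have hmoved : p (t' + 1) = p t' + (d : ZMod n) := by
          by_cases hE : E t' (if d = 1 then p t' else p t' - 1)
          · exact (hstep t').1 hE
          · exact absurd ((hstep t').2 hE) ht2
        exact ⟨t', ht1, hconst, hmoved⟩
      · push_neg at hS
        exfalso
        have hconst : ∀ s, t ≤ s → p s = p t := by
          intro s hts
          induction s with
          | zero => rw [Nat.le_zero.mp hts]
          | succ s ih =>
            rcases Nat.lt_or_ge t (s + 1) with h | h
            · have hts' : t ≤ s := Nat.lt_succ_iff.mp h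
              rw [hS s hts', ih hts']
            · rw [le_antisymm hts h]
        set e : ZMod n := if d = 1 then p t else p t - 1 with he
        obtain ⟨s, hsE, hts⟩ := (hrec e).exists_gt t
        have hps : p s = p t := hconst s (le_of_lt hts)
        have hE : E s (if d = 1 then p s else p s - 1) := by
          rw [hps]; exact hsE
        have := (hstep s).1 hE
        rw [hS s (le_of_lt hts)] at this
        exact hd0 (left_eq_add.mp this)
    -- from any time we can reach p t + k*d
    have hreach : ∀ t, ∀ k : ℕ, ∃ t', t ≤ t' ∧ p t' = p t + (k : ZMod n) * (d : ZMod n) := by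
      intro t k
      induction k with
      | zero => exact ⟨t, le_refl t, by simp⟩
      | succ k ih =>
        obtain ⟨t', ht1, ht2⟩ := ih
        obtain ⟨t'', h1, h2, h3⟩ := hmove t'
        refine ⟨t'' + 1, by omega, ?_⟩
        rw [h3, h2 t'' h1 le_rfl, ht2]
        push_cast
        ring
    -- hence u is visited after any time N
    have hvisit : ∀ N : ℕ, ∃ t, N ≤ t ∧ p t = u := by
      intro N
      rcases hd with h | h <;> subst h
      · obtain ⟨t, ht1, ht2⟩ := hreach N (u - p N).val
        refine ⟨t, ht1, ?_⟩
        rw [ht2]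
        simp [ZMod.natCast_val, ZMod.cast_id]
      · obtain ⟨t, ht1, ht2⟩ := hreach N (p N - u).val
        refine ⟨t, ht1, ?_⟩
        rw [ht2]
        push_cast
        rw [ZMod.natCast_val, ZMod.cast_id]
        ring
    apply Set.infinite_of_not_bddAbove
    rintro ⟨B, hB⟩
    obtain ⟨t, ht1, ht2⟩ := hvisit (B + 1)
    have := hB ht2
    omega
end

section
/- Under algorithm PEF_3+ (a robot reverses its direction exactly when it has moved in the previous round and is currently co-located with another robot), if two robots form a tower at time t (i.e., occupy the same node at time t while not both occupying the same node at time t−1 with the same directions), then immediately after the Compute phase of time t the two robots consider opposite global directions, and they keep these opposite directions as long as they remain co-located. -/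
/-!
When two robots meet, either both moved (then they came from different nodes with opposite
directions, and both reverse), neither moved (then they were already on the same node with
different directions, and neither reverses), or exactly one moved. In the last case the one
that moved crossed an edge which the other one did not take although it was present, so the
other one was pointing away from that edge, i.e. both had the same direction; only the mover
reverses. In every case the directions become opposite. Once they are opposite the hypothesis
of this one-step argument holds again, which gives persistence by induction.
-/

/-- The edge `{p, p + 1}` is indexed by `p`; this is the edge a robot at `p` with direction
`d = ±1` tries to cross. -/
def travelEdge {n : ℕ} (p : ZMod n) (d : ℤ) : ZMod n := if d = 1 then p else p - 1

lemma travelEdge_add_neg {n : ℕ} (p : ZMod n) {d : ℤ} (hd : d = 1 ∨ d = -1) :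
    travelEdge (p + (d : ZMod n)) (-d) = travelEdge p d := by
  rcases hd with rfl | rfl <;> simp [travelEdge, sub_eq_add_neg]

structure IsPEF3PlusRun {n : ℕ} {ι : Type} (E : ℕ → ZMod n → Prop) (pos : ℕ → ι → ZMod n)
    (dir : ℕ → ι → ℤ) (moved : ℕ → ι → Prop) : Prop where
  dir_eq : ∀ t r, dir t r = 1 ∨ dir t r = -1
  move : ∀ t r,
    (E t (travelEdge (pos t r) (dir t r)) →
      pos (t + 1) r = pos t r + ((dir t r : ℤ) : ZMod n) ∧ moved t r) ∧
    (¬ E t (travelEdge (pos t r) (dir t r)) → pos (t + 1) r = pos t r ∧ ¬ moved t r)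
  compute : ∀ t r,
    ((moved t r ∧ ∃ r', r' ≠ r ∧ pos (t + 1) r' = pos (t + 1) r) →
      dir (t + 1) r = -dir t r) ∧
    (¬ (moved t r ∧ ∃ r', r' ≠ r ∧ pos (t + 1) r' = pos (t + 1) r) →
      dir (t + 1) r = dir t r)

namespace IsPEF3PlusRun

variable {n : ℕ} {ι : Type} {E : ℕ → ZMod n → Prop} {pos : ℕ → ι → ZMod n}
  {dir : ℕ → ι → ℤ} {moved : ℕ → ι → Prop} (h : IsPEF3PlusRun E pos dir moved)
  {s : ℕ} {r r₁ r₂ : ι}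

include h

lemma moved_iff (s : ℕ) (r : ι) : moved s r ↔ E s (travelEdge (pos s r) (dir s r)) :=
  ⟨fun hm => by_contra fun hE => ((h.move s r).2 hE).2 hm, fun hE => ((h.move s r).1 hE).2⟩

lemma pos_succ_of_moved (hm : moved s r) : pos (s + 1) r = pos s r + ((dir s r : ℤ) : ZMod n) :=
  ((h.move s r).1 ((h.moved_iff s r).1 hm)).1

lemma pos_succ_of_not_moved (hm : ¬ moved s r) : pos (s + 1) r = pos s r :=
  ((h.move s r).2 (mt (h.moved_iff s r).2 hm)).1

lemma dir_succ_of_moved {r' : ι} (hm : moved s r) (hne : r' ≠ r)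
    (hco : pos (s + 1) r' = pos (s + 1) r) : dir (s + 1) r = -dir s r :=
  (h.compute s r).1 ⟨hm, r', hne, hco⟩

lemma dir_succ_of_not_moved (hm : ¬ moved s r) : dir (s + 1) r = dir s r :=
  (h.compute s r).2 fun hm' => hm hm'.1

lemma dir_eq_neg_of_ne (hd : dir s r₁ ≠ dir s r₂) : dir s r₁ = -dir s r₂ := by
  rcases h.dir_eq s r₁ with h₁ | h₁ <;> rcases h.dir_eq s r₂ with h₂ | h₂ <;> omega

lemma dir_ne_of_eq_neg (hd : dir s r₁ = -dir s r₂) : dir s r₁ ≠ dir s r₂ := by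
  rcases h.dir_eq s r₂ with h₂ | h₂ <;> omega

lemma dir_eq_of_meet_of_moved_of_not_moved (hm₁ : moved s r₁) (hm₂ : ¬ moved s r₂)
    (hco : pos (s + 1) r₁ = pos (s + 1) r₂) : dir s r₁ = dir s r₂ := by
  by_contra hd
  have hopp : dir s r₂ = -dir s r₁ := h.dir_eq_neg_of_ne (Ne.symm hd)
  have hp : pos s r₂ = pos s r₁ + ((dir s r₁ : ℤ) : ZMod n) := by
    rw [← h.pos_succ_of_not_moved hm₂, ← hco, h.pos_succ_of_moved hm₁]
  apply hm₂
  rw [h.moved_iff, hp, hopp, travelEdge_add_neg _ (h.dir_eq s r₁)]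
  exact (h.moved_iff s r₁).1 hm₁

lemma dir_succ_eq_neg_of_meet (hne : r₁ ≠ r₂) (hco : pos (s + 1) r₁ = pos (s + 1) r₂)
    (hnew : ¬ (pos s r₁ = pos s r₂ ∧ dir s r₁ = dir s r₂)) :
    dir (s + 1) r₁ = -dir (s + 1) r₂ := by
  by_cases hm₁ : moved s r₁ <;> by_cases hm₂ : moved s r₂
  · have hd : dir s r₁ ≠ dir s r₂ := fun hd => hnew ⟨add_right_cancel (by
      rwa [h.pos_succ_of_moved hm₁, h.pos_succ_of_moved hm₂, hd] at hco), hd⟩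
    rw [h.dir_succ_of_moved hm₁ hne.symm hco.symm, h.dir_succ_of_moved hm₂ hne hco,
      h.dir_eq_neg_of_ne hd]
  · rw [h.dir_succ_of_moved hm₁ hne.symm hco.symm, h.dir_succ_of_not_moved hm₂,
      h.dir_eq_of_meet_of_moved_of_not_moved hm₁ hm₂ hco]
  · rw [h.dir_succ_of_not_moved hm₁, h.dir_succ_of_moved hm₂ hne hco,
      h.dir_eq_of_meet_of_moved_of_not_moved hm₂ hm₁ hco.symm, neg_neg]
  · have hp : pos s r₁ = pos s r₂ := by
      rw [← h.pos_succ_of_not_moved hm₁, ← h.pos_succ_of_not_moved hm₂, hco]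
    rw [h.dir_succ_of_not_moved hm₁, h.dir_succ_of_not_moved hm₂,
      h.dir_eq_neg_of_ne fun hd => hnew ⟨hp, hd⟩]

lemma dir_eq_neg_of_colocated (hne : r₁ ≠ r₂) {t t' : ℕ} (hopp : dir t r₁ = -dir t r₂)
    (hco : ∀ s, t < s → s ≤ t' → pos s r₁ = pos s r₂) (ht : t ≤ t') :
    dir t' r₁ = -dir t' r₂ := by
  induction t', ht using Nat.le_induction with
  | base => exact hopp
  | succ s hs ih =>
    refine h.dir_succ_eq_neg_of_meet hne (hco (s + 1) (Nat.lt_succ_of_le hs) le_rfl) ?_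
    exact fun hsame => h.dir_ne_of_eq_neg (ih fun u hu hus => hco u hu (hus.trans s.le_succ))
      hsame.2

end IsPEF3PlusRun

theorem stmt5_general {n : ℕ} {ι : Type}
    (E : ℕ → ZMod n → Prop)
    (pos : ℕ → ι → ZMod n) (dir : ℕ → ι → ℤ) (moved : ℕ → ι → Prop)
    (hdir : ∀ t r, dir t r = 1 ∨ dir t r = -1)
    (hmove : ∀ t r,
      (E t (if dir t r = 1 then pos t r else pos t r - 1) →
        pos (t + 1) r = pos t r + ((dir t r : ℤ) : ZMod n) ∧ moved t r) ∧
      (¬ E t (if dir t r = 1 then pos t r else pos t r - 1) →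
        pos (t + 1) r = pos t r ∧ ¬ moved t r))
    (hcompute : ∀ t r,
      ((moved t r ∧ ∃ r', r' ≠ r ∧ pos (t + 1) r' = pos (t + 1) r) →
        dir (t + 1) r = -dir t r) ∧
      (¬ (moved t r ∧ ∃ r', r' ≠ r ∧ pos (t + 1) r' = pos (t + 1) r) →
        dir (t + 1) r = dir t r))
    (t : ℕ) (r₁ r₂ : ι) (hne : r₁ ≠ r₂)
    (htower : pos (t + 1) r₁ = pos (t + 1) r₂)
    (hnew : ¬ (pos t r₁ = pos t r₂ ∧ dir t r₁ = dir t r₂)) :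
    dir (t + 1) r₁ = -dir (t + 1) r₂ ∧
    ∀ t' ≥ t + 1, (∀ s, t + 1 ≤ s → s ≤ t' → pos s r₁ = pos s r₂) →
      dir t' r₁ = -dir t' r₂ := by
  have h : IsPEF3PlusRun E pos dir moved := ⟨hdir, hmove, hcompute⟩
  have hopp := h.dir_succ_eq_neg_of_meet hne htower hnew
  exact ⟨hopp, fun t' ht' hco =>
    h.dir_eq_neg_of_colocated hne hopp (fun s hs hs' => hco s hs.le hs') ht'⟩

/-- Under PEF_3+ (a robot reverses direction exactly when it moved during
the previous round and is co-located with another robot), if exactly two robots form a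
tower at time `t+1` (same node at `t+1`, but not both on the same node with the same
direction at time `t`), then right after the Compute phase of time `t+1` their directions
are opposite, and they stay opposite as long as the two robots remain co-located. -/
theorem stmt5 {n : ℕ} {ι : Type} [Fintype ι]
    (E : ℕ → ZMod n → Prop)
    (pos : ℕ → ι → ZMod n) (dir : ℕ → ι → ℤ) (moved : ℕ → ι → Prop)
    (hdir : ∀ t r, dir t r = 1 ∨ dir t r = -1)
    (hmove : ∀ t r,
      (E t (if dir t r = 1 then pos t r else pos t r - 1) →
        pos (t + 1) r = pos t r + ((dir t r : ℤ) : ZMod n) ∧ moved t r) ∧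
      (¬ E t (if dir t r = 1 then pos t r else pos t r - 1) →
        pos (t + 1) r = pos t r ∧ ¬ moved t r))
    (hcompute : ∀ t r,
      ((moved t r ∧ ∃ r', r' ≠ r ∧ pos (t + 1) r' = pos (t + 1) r) →
        dir (t + 1) r = -dir t r) ∧
      (¬ (moved t r ∧ ∃ r', r' ≠ r ∧ pos (t + 1) r' = pos (t + 1) r) →
        dir (t + 1) r = dir t r))
    (t : ℕ) (r₁ r₂ : ι) (hne : r₁ ≠ r₂)
    (htower : pos (t + 1) r₁ = pos (t + 1) r₂)
    (honly : ∀ r : ι, pos (t + 1) r = pos (t + 1) r₁ → r = r₁ ∨ r = r₂)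
    (hnew : ¬ (pos t r₁ = pos t r₂ ∧ dir t r₁ = dir t r₂)) :
    dir (t + 1) r₁ = -dir (t + 1) r₂ ∧
    ∀ t' ≥ t + 1, (∀ s, t + 1 ≤ s → s ≤ t' → pos s r₁ = pos s r₂) →
      dir t' r₁ = -dir t' r₂ :=
  stmt5_general E pos dir moved hdir hmove hcompute t r₁ r₂ hne htower hnew
end

section
/- There is no deterministic algorithm for a single robot that perpetually explores every connected-over-time evolving ring of size n ≥ 3. Specifically, for any deterministic single-robot algorithm A and any n ≥ 3, there exists a connected-over-time evolving ring G_ω over C_n such that in the execution of A on G_ω the robot visits at most 2 (adjacent) nodes. -/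
/-- The graph on `ZMod n` whose edges are the recurrent edges of the evolving ring `E`. -/
def recGraph (n : ℕ) (E : ℕ → ZMod n → Prop) : SimpleGraph (ZMod n) where
  Adj x y := x ≠ y ∧
    ((y = x + 1 ∧ {t | E t x}.Infinite) ∨ (x = y + 1 ∧ {t | E t y}.Infinite))
  symm := ⟨fun x y h => ⟨h.1.symm, h.2.elim (fun h' => Or.inr h') (fun h' => Or.inl h')⟩⟩
  loopless := ⟨fun x h => h.1 rfl⟩

/-- Execution of a deterministic single-robot algorithm `A` (mapping the current state
and the presence of the two adjacent edges to a new state and a direction, `true` for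
clockwise `+1`, `false` for counter-clockwise `-1`) on the evolving ring `E`: the robot
moves in the chosen direction iff the corresponding edge is present. -/
def runRobot {State : Type} {n : ℕ} (A : State → Bool → Bool → State × Bool)
    (E : ℕ → ZMod n → Bool) (s0 : State) (p0 : ZMod n) : ℕ → State × ZMod n
  | 0 => (s0, p0)
  | t + 1 =>
    let sp := runRobot A E s0 p0 t
    let out := A sp.1 (E t (sp.2 - 1)) (E t sp.2)
    (out.1,
      if out.2 then (if E t sp.2 then sp.2 + 1 else sp.2)
      else (if E t (sp.2 - 1) then sp.2 - 1 else sp.2))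

/-!
The adversary watches the robot, which starts at `v`, and at each round removes a single edge:
the edge `v - 1` (between `v - 1` and `v`) while the robot stands at `v`, the edge `v + 1`
(between `v + 1` and `v + 2`) otherwise. The robot can then never leave `{v, v + 1}`. Since only
one edge is missing at any time, by pigeonhole some edge `w` is the missing one infinitely often
and every other edge is present infinitely often, so the recurrent edges contain the path
obtained by deleting `w` from the ring, which is connected.
-/

namespace SimpleGraph

theorem connected_of_adj_add_one_of_ne {n : ℕ} [NeZero n] (G : SimpleGraph (ZMod n))
    (w : ZMod n) (h : ∀ x, x ≠ w → G.Adj x (x + 1)) : G.Connected := by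
  have reach : ∀ k < n, G.Reachable (w + 1) (w + 1 + k) := by
    intro k hk
    induction k with
    | zero => simp
    | succ k ih =>
      have hk0 : ((k + 1 : ℕ) : ZMod n) ≠ 0 := by
        rw [Ne, ZMod.natCast_eq_zero_iff]
        exact Nat.not_dvd_of_pos_of_lt k.succ_pos hk
      have hne : w + 1 + k ≠ w := fun h' => hk0 (by push_cast; linear_combination h')
      refine (ih (by omega)).trans ?_
      convert (h _ hne).reachable using 1
      push_cast
      ring
  refine (connected_iff_exists_forall_reachable G).2 ⟨w + 1, fun z => ?_⟩
  convert reach (z - (w + 1)).val (ZMod.val_lt _)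
  rw [ZMod.natCast_zmod_val]
  ring

end SimpleGraph

section RecurrentGraph

variable {n : ℕ}

theorem recGraph_adj_add_one [Nontrivial (ZMod n)] {E : ℕ → ZMod n → Prop} {x : ZMod n}
    (hx : {t | E t x}.Infinite) : (recGraph n E).Adj x (x + 1) :=
  ⟨by simp, Or.inl ⟨rfl, hx⟩⟩

theorem recGraph_connected_of_forall_ne [NeZero n] [Nontrivial (ZMod n)]
    (E : ℕ → ZMod n → Prop) (b : ℕ → ZMod n) (hE : ∀ t x, x ≠ b t → E t x) :
    (recGraph n E).Connected := by
  obtain ⟨w, hw⟩ := Finite.exists_infinite_fiber b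
  refine SimpleGraph.connected_of_adj_add_one_of_ne _ w fun x hx => recGraph_adj_add_one ?_
  exact (Set.infinite_coe_iff.1 hw).mono fun t ht => hE t x (by rw [ht]; exact hx)

end RecurrentGraph

section AdaptiveAdversary

variable {State : Type} {n : ℕ} (A : State → Bool → Bool → State × Bool)

def robotStep (e : ZMod n → Bool) (sp : State × ZMod n) : State × ZMod n :=
  let out := A sp.1 (e (sp.2 - 1)) (e sp.2)
  (out.1,
    if out.2 then (if e sp.2 then sp.2 + 1 else sp.2)
    else (if e (sp.2 - 1) then sp.2 - 1 else sp.2))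

theorem runRobot_succ (E : ℕ → ZMod n → Bool) (s0 : State) (p0 : ZMod n) (t : ℕ) :
    runRobot A E s0 p0 (t + 1) = robotStep A (E t) (runRobot A E s0 p0 t) :=
  rfl

theorem robotStep_snd (e : ZMod n → Bool) (sp : State × ZMod n) :
    (robotStep A e sp).2 = sp.2 ∨
      (e sp.2 = true ∧ (robotStep A e sp).2 = sp.2 + 1) ∨
      (e (sp.2 - 1) = true ∧ (robotStep A e sp).2 = sp.2 - 1) := by
  unfold robotStep
  dsimp only
  split_ifs <;> simp [*]

def runAdaptive (adv : State × ZMod n → ZMod n → Bool) (s0 : State) (p0 : ZMod n) :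
    ℕ → State × ZMod n
  | 0 => (s0, p0)
  | t + 1 =>
    let sp := runAdaptive adv s0 p0 t
    robotStep A (adv sp) sp

theorem runRobot_runAdaptive (adv : State × ZMod n → ZMod n → Bool) (s0 : State)
    (p0 : ZMod n) :
    runRobot A (fun t => adv (runAdaptive A adv s0 p0 t)) s0 p0 = runAdaptive A adv s0 p0 := by
  funext t
  induction t with
  | zero => rfl
  | succ t ih => rw [runRobot_succ, ih, runAdaptive]

def outerEdge (v p : ZMod n) : ZMod n :=
  if p = v then v - 1 else v + 1

def blockOuter (v : ZMod n) (sp : State × ZMod n) (x : ZMod n) : Bool :=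
  decide (x ≠ outerEdge v sp.2)

theorem robotStep_blockOuter_mem [Nontrivial (ZMod n)] (v : ZMod n) (sp : State × ZMod n)
    (h : sp.2 = v ∨ sp.2 = v + 1) :
    (robotStep A (blockOuter v sp) sp).2 = v ∨ (robotStep A (blockOuter v sp) sp).2 = v + 1 := by
  have hv : v + 1 ≠ v := by simp
  rcases robotStep_snd A (blockOuter v sp) sp with hp | ⟨he, hp⟩ | ⟨he, hp⟩ <;> rw [hp]
  · exact h
  · rcases h with h | h
    · simp [h]
    · simp [blockOuter, outerEdge, h, hv] at he
  · rcases h with h | h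
    · simp [blockOuter, outerEdge, h] at he
    · simp [h]

theorem runAdaptive_blockOuter_mem [Nontrivial (ZMod n)] (v : ZMod n) (s0 : State) (t : ℕ) :
    (runAdaptive A (blockOuter v) s0 v t).2 = v ∨
      (runAdaptive A (blockOuter v) s0 v t).2 = v + 1 := by
  induction t with
  | zero => exact Or.inl rfl
  | succ t ih => exact robotStep_blockOuter_mem A v _ ih

end AdaptiveAdversary

/-- No deterministic single-robot algorithm perpetually explores every
connected-over-time evolving ring of size `n ≥ 3`: for every algorithm `A` there is a
connected-over-time evolving ring on which the robot only ever visits (at most) two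
adjacent nodes. -/
theorem stmt8 {State : Type} (A : State → Bool → Bool → State × Bool)
    (n : ℕ) (hn : 3 ≤ n) (s0 : State) (p0 : ZMod n) :
    ∃ E : ℕ → ZMod n → Bool,
      (recGraph n (fun t e => E t e = true)).Connected ∧
      ∃ v : ZMod n, ∀ t : ℕ,
        (runRobot A E s0 p0 t).2 = v ∨ (runRobot A E s0 p0 t).2 = v + 1 := by
  have : NeZero n := ⟨by omega⟩
  have : Fact (1 < n) := ⟨by omega⟩
  let pos := runAdaptive A (blockOuter p0) s0 p0
  refine ⟨fun t => blockOuter p0 (pos t), ?_, p0, fun t => ?_⟩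
  · exact recGraph_connected_of_forall_ne _ (fun t => outerEdge p0 (pos t).2)
      fun t x hx => decide_eq_true hx
  · rw [runRobot_runAdaptive]
    exact runAdaptive_blockOuter_mem A p0 s0 t
end

section
/- In a synchronous round on a ring where each robot occupies a node and moves by at most one edge, if at time t the maximum number of robots on any node is 1, then a node can receive robots only from itself and its two neighbors, so at time t+1 at most 3 robots occupy any node; and if every node with both adjacent edges present forces any robot there to move (robots always point a direction and move when the pointed edge is present), then at most 2 robots occupy any node at time t+1. -/
/-- In a synchronous round on a ring (`n ≥ 3`) where robots occupy pairwise
distinct nodes at time `t` and each robot moves by at most one edge (moving one step in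
its direction `d_r` only if the corresponding edge is present), each node receives robots
only from itself and its two neighbors, so at most 3 robots occupy any node at time
`t+1`; and if moreover every robot whose pointed edge is present must move, then at most
2 robots occupy any node at time `t+1`. -/
theorem stmt11 {n : ℕ} {ι : Type} [Fintype ι] (hn : 3 ≤ n)
    (E : ℕ → ZMod n → Prop)
    (p : ℕ → ι → ZMod n) (d : ι → ℤ)
    (hd : ∀ r, d r = 1 ∨ d r = -1)
    (t : ℕ)
    (hinj : Function.Injective (fun r : ι => p t r))
    (hmove : ∀ r : ι, p (t + 1) r = p t r ∨ p (t + 1) r = p t r + ((d r : ℤ) : ZMod n))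
    (hedge : ∀ r : ι, p (t + 1) r = p t r + ((d r : ℤ) : ZMod n) →
        E t (if d r = 1 then p t r else p t r - 1)) :
    (∀ u : ZMod n, {r : ι | p (t + 1) r = u}.ncard ≤ 3) ∧
    ((∀ r : ι, E t (if d r = 1 then p t r else p t r - 1) →
        p (t + 1) r = p t r + ((d r : ℤ) : ZMod n)) →
      ∀ u : ZMod n, {r : ι | p (t + 1) r = u}.ncard ≤ 2) := by
  haveI : NeZero n := ⟨by omega⟩
  haveI : Fact (1 < n) := ⟨by omega⟩
  have h1 : (1 : ZMod n) ≠ 0 := one_ne_zero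
  have h2 : (2 : ZMod n) ≠ 0 := by
    have : ¬ ((2 : ℕ) : ZMod n) = 0 := by
      rw [ZMod.natCast_eq_zero_iff]
      intro h
      have := Nat.le_of_dvd (by norm_num) h
      omega
    simpa using this
  -- generic counting bound via injectivity of positions at time t
  have key : ∀ (u : ZMod n) (T : Set (ZMod n)), T.Finite →
      (∀ r : ι, p (t + 1) r = u → p t r ∈ T) →
      {r : ι | p (t + 1) r = u}.ncard ≤ T.ncard := by
    intro u T hTfin hT
    refine Set.ncard_le_ncard_of_injOn (fun r => p t r) (fun r hr => hT r hr) ?_ hTfin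
    intro a _ b _ hab
    exact hinj hab
  -- where can a robot landing on u come from
  have loc : ∀ (u : ZMod n) (r : ι), p (t + 1) r = u →
      p t r = u ∨ (p t r = u - 1 ∧ E t (u - 1)) ∨ (p t r = u + 1 ∧ E t u) := by
    intro u r hr
    rcases hmove r with h | h
    · left; rw [← hr, h]
    · have hE := hedge r h
      rcases hd r with hdr | hdr
      · right; left
        rw [hdr] at h hE
        simp only [if_pos rfl] at hE
        have hcast : ((1 : ℤ) : ZMod n) = 1 := by push_cast; ring
        rw [hcast] at h
        have hpt : p t r = u - 1 := by rw [← hr, h]; ring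
        exact ⟨hpt, by rwa [hpt] at hE⟩
      · right; right
        rw [hdr] at h hE
        simp only [if_neg (by norm_num : ¬ ((-1 : ℤ) = 1))] at hE
        have hcast : ((-1 : ℤ) : ZMod n) = -1 := by push_cast; ring
        rw [hcast] at h
        have hpt : p t r = u + 1 := by rw [← hr, h]; ring
        have : p t r - 1 = u := by rw [hpt]; ring
        exact ⟨hpt, by rwa [this] at hE⟩
  constructor
  · -- at most 3
    intro u
    have := key u {u - 1, u, u + 1} (by
      exact (Set.finite_singleton _).insert _ |>.insert _) (by
      intro r hr
      rcases loc u r hr with h | ⟨h, _⟩ | ⟨h, _⟩ <;> simp [h])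
    refine this.trans ((Set.ncard_insert_le _ _).trans ?_)
    have h := Set.ncard_insert_le (u : ZMod n) ({u + 1} : Set (ZMod n))
    simp only [Set.ncard_singleton] at h
    omega
  · -- at most 2 under the forcing hypothesis
    intro hforce u
    have pair_le : ∀ a b : ZMod n, ({a, b} : Set (ZMod n)).ncard ≤ 2 := by
      intro a b
      exact (Set.ncard_insert_le _ _).trans (by simp [Set.ncard_singleton])
    by_cases hstay : ∃ r : ι, p (t + 1) r = u ∧ p t r = u
    · obtain ⟨r0, hr0, hpt0⟩ := hstay
      rcases hd r0 with hdr | hdr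
      · -- direction +1: edge E t u must be absent
        have hnE : ¬ E t u := by
          intro hEu
          have := hforce r0 (by rw [hdr]; simpa [hpt0] using hEu)
          rw [hdr] at this
          have hcast : ((1 : ℤ) : ZMod n) = 1 := by push_cast; ring
          rw [hcast, hr0, hpt0] at this
          have h10 : (1 : ZMod n) = 0 := by linear_combination -this
          exact h1 h10
        refine (key u {u - 1, u} (Set.toFinite _) ?_).trans (pair_le _ _)
        intro r hr
        rcases loc u r hr with h | ⟨h, _⟩ | ⟨_, hE⟩
        · simp [h]
        · simp [h]
        · exact absurd hE hnE
      · -- direction -1: edge E t (u-1) must be absent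
        have hnE : ¬ E t (u - 1) := by
          intro hEu
          have := hforce r0 (by
            rw [hdr]
            simp only [if_neg (by norm_num : ¬ ((-1 : ℤ) = 1))]
            rwa [hpt0])
          rw [hdr] at this
          have hcast : ((-1 : ℤ) : ZMod n) = -1 := by push_cast; ring
          rw [hcast, hr0, hpt0] at this
          have h10 : (1 : ZMod n) = 0 := by linear_combination this
          exact h1 h10
        refine (key u {u, u + 1} (Set.toFinite _) ?_).trans (pair_le _ _)
        intro r hr
        rcases loc u r hr with h | ⟨_, hE⟩ | ⟨h, _⟩
        · simp [h]
        · exact absurd hE hnE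
        · simp [h]
    · push_neg at hstay
      refine (key u {u - 1, u + 1} (Set.toFinite _) ?_).trans (pair_le _ _)
      intro r hr
      rcases loc u r hr with h | ⟨h, _⟩ | ⟨h, _⟩
      · exact absurd h (hstay r hr)
      · simp [h]
      · simp [h]
end

section
/- On an evolving ring, if a robot r at time t points in global direction d at node u, and whenever robots meet (occupy the same node) there are exactly two of them with opposite directions, and robots keep their direction unless they meet (reversing upon meeting after a move), and the edge from u in direction d is recurrent, then there exists a time t' ≥ t at which some robot (possibly different from r) is located at node u + d and points in global direction d. -/
/-- direction propagation: Under PEF_3+ (robots keep their direction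
unless they moved in the previous round and are co-located, in which case they reverse;
they move one step in their direction whenever the pointed edge is present), if every
tower consists of exactly two robots holding opposite directions, a robot holds global
direction `d` at node `u` at time `t`, and the edge joining `u` and `u + d` is present
at infinitely many times `≥ t`, then at some time `t' ≥ t` some robot is located at
`u + d` and holds direction `d`. -/
theorem stmt12 {n : ℕ} {ι : Type} [Fintype ι]
    (E : ℕ → ZMod n → Prop)
    (pos : ℕ → ι → ZMod n) (dir : ℕ → ι → ℤ) (moved : ℕ → ι → Prop)
    (hdir : ∀ t r, dir t r = 1 ∨ dir t r = -1)
    (hmove : ∀ t r,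
      (E t (if dir t r = 1 then pos t r else pos t r - 1) →
        pos (t + 1) r = pos t r + ((dir t r : ℤ) : ZMod n) ∧ moved t r) ∧
      (¬ E t (if dir t r = 1 then pos t r else pos t r - 1) →
        pos (t + 1) r = pos t r ∧ ¬ moved t r))
    (hcompute : ∀ t r,
      ((moved t r ∧ ∃ r', r' ≠ r ∧ pos (t + 1) r' = pos (t + 1) r) →
        dir (t + 1) r = -dir t r) ∧
      (¬ (moved t r ∧ ∃ r', r' ≠ r ∧ pos (t + 1) r' = pos (t + 1) r) →
        dir (t + 1) r = dir t r))
    (htower : ∀ (t : ℕ) (r r' : ι), r ≠ r' → pos t r = pos t r' →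
        dir t r = -dir t r' ∧ ∀ r'' : ι, pos t r'' = pos t r → r'' = r ∨ r'' = r')
    (t : ℕ) (r : ι) (u : ZMod n) (d : ℤ) (hd : d = 1 ∨ d = -1)
    (hpos : pos t r = u) (hdr : dir t r = d)
    (hrec : {s | t ≤ s ∧ E s (if d = 1 then u else u - 1)}.Infinite) :
    ∃ t' ≥ t, ∃ r' : ι, pos t' r' = u + ((d : ℤ) : ZMod n) ∧ dir t' r' = d := by
  classical
  have hex : ∃ s, t ≤ s ∧ E s (if d = 1 then u else u - 1) := hrec.nonempty
  set s₀ := Nat.find hex with hs₀def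
  have hspec := Nat.find_spec hex
  have hminlt : ∀ s < s₀, ¬ (t ≤ s ∧ E s (if d = 1 then u else u - 1)) :=
    fun s hs => Nat.find_min hex hs
  have key : ∀ s, t ≤ s → s ≤ s₀ → pos s r = u ∧ dir s r = d := by
    intro s hts
    induction s, hts using Nat.le_induction with
    | base => exact fun _ => ⟨hpos, hdr⟩
    | succ s hts ih =>
      intro hle
      have hs_lt : s < s₀ := Nat.lt_of_succ_le hle
      obtain ⟨hp, hdd⟩ := ih hs_lt.le
      have hnE : ¬ E s (if dir s r = 1 then pos s r else pos s r - 1) := by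
        rw [hdd, hp]; exact fun h => hminlt s hs_lt ⟨hts, h⟩
      obtain ⟨hp', hm'⟩ := (hmove s r).2 hnE
      have hd' : dir (s + 1) r = dir s r := (hcompute s r).2 (fun h => hm' h.1)
      exact ⟨hp'.trans hp, hd'.trans hdd⟩
  obtain ⟨hp, hdd⟩ := key s₀ hspec.1 le_rfl
  have hE : E s₀ (if dir s₀ r = 1 then pos s₀ r else pos s₀ r - 1) := by
    rw [hdd, hp]; exact hspec.2
  obtain ⟨hp1, hm1⟩ := (hmove s₀ r).1 hE
  rw [hp, hdd] at hp1
  have hts1 : t ≤ s₀ + 1 := le_trans hspec.1 (Nat.le_succ _)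
  by_cases hcol : ∃ r', r' ≠ r ∧ pos (s₀ + 1) r' = pos (s₀ + 1) r
  · obtain ⟨r', hne', hpr'⟩ := hcol
    have hdr1 : dir (s₀ + 1) r = -dir s₀ r :=
      (hcompute s₀ r).1 ⟨hm1, r', hne', hpr'⟩
    have htw := (htower (s₀ + 1) r r' hne'.symm hpr'.symm).1
    refine ⟨s₀ + 1, hts1, r', hpr'.trans hp1, ?_⟩
    have : dir (s₀ + 1) r' = -dir (s₀ + 1) r := by linarith
    rw [this, hdr1, hdd, neg_neg]
  · refine ⟨s₀ + 1, hts1, r, hp1, ?_⟩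
    rw [(hcompute s₀ r).2 (fun h => hcol h.2), hdd]
end

section
/- In any execution of PEF_3+ with k ≥ 3 robots on a connected-over-time ring containing an eventually missing edge, at least one tower is formed: it is impossible that no two robots ever occupy the same node. -/
private lemma val_sub_one_lt' {n : ℕ} [NeZero n] (x : ZMod n) (hx : x ≠ 0) :
    (x - 1).val < x.val := by
  have h1 : 0 < x.val := by
    rcases Nat.eq_zero_or_pos x.val with h | h
    · exact absurd ((ZMod.val_eq_zero x).mp h) hx
    · exact h
  have hlt : x.val < n := ZMod.val_lt x
  have hx' : ((x.val : ℕ) : ZMod n) = x := ZMod.natCast_rightInverse x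
  have hx2 : x - 1 = ((x.val - 1 : ℕ) : ZMod n) := by
    rw [Nat.cast_sub h1, hx', Nat.cast_one]
  rw [hx2, ZMod.val_cast_of_lt (by omega)]
  omega

/-- In any execution of PEF_3+ by `k ≥ 3` robots (with `n > k` nodes) on a
connected-over-time evolving ring having an eventually missing edge `e` (absent at all
times `≥ T`, all other edges recurrent), at least one tower is formed: it is impossible
that no two robots ever occupy the same node. -/
theorem stmt19 {n : ℕ} {ι : Type} [Fintype ι]
    (hk : 3 ≤ Fintype.card ι) (hn : Fintype.card ι < n)
    (E : ℕ → ZMod n → Prop) (e : ZMod n) (T : ℕ)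
    (hmiss : ∀ t ≥ T, ¬ E t e)
    (hrec : ∀ e' : ZMod n, e' ≠ e → {t | E t e'}.Infinite)
    (pos : ℕ → ι → ZMod n) (dir : ℕ → ι → ℤ) (moved : ℕ → ι → Prop)
    (hdir : ∀ t r, dir t r = 1 ∨ dir t r = -1)
    (hmove : ∀ t r,
      (E t (if dir t r = 1 then pos t r else pos t r - 1) →
        pos (t + 1) r = pos t r + ((dir t r : ℤ) : ZMod n) ∧ moved t r) ∧
      (¬ E t (if dir t r = 1 then pos t r else pos t r - 1) →
        pos (t + 1) r = pos t r ∧ ¬ moved t r))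
    (hcompute : ∀ t r,
      ((moved t r ∧ ∃ r', r' ≠ r ∧ pos (t + 1) r' = pos (t + 1) r) →
        dir (t + 1) r = -dir t r) ∧
      (¬ (moved t r ∧ ∃ r', r' ≠ r ∧ pos (t + 1) r' = pos (t + 1) r) →
        dir (t + 1) r = dir t r)) :
    ∃ (t : ℕ) (r r' : ι), r ≠ r' ∧ pos t r = pos t r' := by
  classical
  by_contra hcon
  push_neg at hcon
  haveI : NeZero n := ⟨by omega⟩
  -- directions never change
  have hdconst : ∀ t r, dir t r = dir 0 r := by
    intro t r
    induction t with
    | zero => rfl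
    | succ t ih =>
      rw [(hcompute t r).2, ih]
      rintro ⟨-, r', hne, hpos⟩
      exact hcon (t + 1) r' r hne hpos
  -- every robot eventually settles at an endpoint of e determined by its direction
  have settle : ∀ r : ι, ∃ t, ∀ s ≥ t,
      pos s r = (if dir 0 r = 1 then e else e + 1) := by
    intro r
    set d : ℤ := dir 0 r with hd0
    have hd : d = 1 ∨ d = -1 := hdir 0 r
    set c : ZMod n := if d = 1 then e else e + 1 with hc
    set d' : ZMod n := ((d : ℤ) : ZMod n) with hd'
    -- the pointed edge at time t
    have hedge : ∀ t, (if dir t r = 1 then pos t r else pos t r - 1)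
        = pos t r + e - c := by
      intro t
      rw [hdconst t r, ← hd0]
      rcases hd with h | h <;> (simp [hc, h]; try ring)
    have hmovecast : ∀ t, ((dir t r : ℤ) : ZMod n) = d' := by
      intro t; rw [hdconst t r, ← hd0]
    -- edge pointed = e iff pos = c
    have hiff : ∀ p : ZMod n, p + e - c = e ↔ p = c := by
      intro p; constructor
      · intro h
        have h2 := sub_eq_zero.mpr h
        rw [show p + e - c - e = p - c by ring] at h2
        exact sub_eq_zero.mp h2
      · intro h; rw [h]; ring
    -- staying at c
    have stay : ∀ t ≥ T, pos t r = c → pos (t + 1) r = c := by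
      intro t ht hp
      have hE : ¬ E t (if dir t r = 1 then pos t r else pos t r - 1) := by
        rw [hedge t, show pos t r + e - c = e by rw [hp]; ring]
        exact hmiss t ht
      rw [((hmove t r).2 hE).1, hp]
    have stayall : ∀ t ≥ T, pos t r = c → ∀ s ≥ t, pos s r = c := by
      intro t ht hp s hs
      induction s with
      | zero =>
        have h0 : t = 0 := by omega
        rwa [← h0]
      | succ s ih =>
        rcases Nat.lt_or_ge t (s + 1) with h | h
        · have hs' : t ≤ s := by omega
          exact stay s (le_trans ht hs') (ih hs')
        · have h1 : t = s + 1 := by omega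
          rwa [← h1]
    -- progress: if not at c, eventually move one step in direction d'
    have progress : ∀ t ≥ T, pos t r ≠ c →
        ∃ t' ≥ T, pos t' r = pos t r + d' := by
      intro t ht hp
      have hne : pos t r + e - c ≠ e := fun h => hp ((hiff _).mp h)
      have hex : ∃ s, t ≤ s ∧ E s (pos t r + e - c) := by
        obtain ⟨b, hb, hb'⟩ := (hrec _ hne).exists_gt t
        exact ⟨b, le_of_lt hb', hb⟩
      set s₀ := Nat.find hex with hs₀def
      have hs₀ := Nat.find_spec hex
      have hmin : ∀ u < s₀, ¬(t ≤ u ∧ E u (pos t r + e - c)) :=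
        fun u hu => Nat.find_min hex hu
      -- position unchanged on [t, s₀]
      have hsame : ∀ u, t ≤ u → u ≤ s₀ → pos u r = pos t r := by
        intro u
        induction u with
        | zero =>
          intro h1 _
          have h0 : t = 0 := by omega
          rw [h0]
        | succ u ih =>
          intro h1 h2
          rcases Nat.lt_or_ge t (u + 1) with h | h
          · have htu : t ≤ u := by omega
            have hu : u < s₀ := by omega
            have hpu := ih htu (le_of_lt hu)
            have hnE : ¬ E u (if dir u r = 1 then pos u r else pos u r - 1) := by
              rw [hedge u, hpu]
              intro hE
              exact hmin u hu ⟨htu, hE⟩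
            rw [((hmove u r).2 hnE).1, hpu]
          · have h1' : t = u + 1 := by omega
            rw [← h1']
      have hps₀ : pos s₀ r = pos t r := hsame s₀ hs₀.1 le_rfl
      have hEs : E s₀ (if dir s₀ r = 1 then pos s₀ r else pos s₀ r - 1) := by
        rw [hedge s₀, hps₀]
        exact hs₀.2
      refine ⟨s₀ + 1, by omega, ?_⟩
      rw [((hmove s₀ r).1 hEs).1, hps₀, hmovecast]
    -- the measure decreases with each move
    have hdd : d' * d' = 1 := by
      rcases hd with h | h <;> simp [hd', h]
    have hdz : ∀ p : ZMod n, p ≠ c → d' * (c - p) ≠ 0 := by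
      intro p hp h
      have hcp : c - p ≠ 0 := sub_ne_zero.mpr (Ne.symm hp)
      apply hcp
      have h2 := congrArg (d' * ·) h
      simpa [← mul_assoc, hdd] using h2
    have hdec : ∀ p : ZMod n, p ≠ c →
        (d' * (c - (p + d'))).val < (d' * (c - p)).val := by
      intro p hp
      have h1 : d' * (c - (p + d')) = d' * (c - p) - 1 := by
        have h2 : d' * (c - (p + d')) = d' * (c - p) - d' * d' := by ring
        rw [h2, hdd]
      rw [h1]
      exact val_sub_one_lt' _ (hdz p hp)
    -- termination
    have hterm : ∀ m : ℕ, ∀ t ≥ T, (d' * (c - pos t r)).val ≤ m →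
        ∃ t' ≥ T, pos t' r = c := by
      intro m
      induction m with
      | zero =>
        intro t ht hv
        have h0 : d' * (c - pos t r) = 0 := (ZMod.val_eq_zero _).mp (Nat.le_zero.mp hv)
        have hpc : pos t r = c := by
          by_contra hne
          exact hdz _ hne h0
        exact ⟨t, ht, hpc⟩
      | succ m ih =>
        intro t ht hv
        by_cases hpc : pos t r = c
        · exact ⟨t, ht, hpc⟩
        · obtain ⟨t', ht', hpt'⟩ := progress t ht hpc
          apply ih t' ht'
          rw [hpt']
          have hd2 := hdec (pos t r) hpc
          omega
    obtain ⟨t', ht', hpc⟩ := hterm ((d' * (c - pos T r)).val) T le_rfl le_rfl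
    exact ⟨t', fun s hs => stayall t' ht' hpc s hs⟩
  -- pigeonhole: two robots share a direction
  obtain ⟨r, r', hne, hdeq⟩ : ∃ r r' : ι, r ≠ r' ∧ dir 0 r = dir 0 r' := by
    have hcard : Fintype.card Bool < Fintype.card ι := by
      simp only [Fintype.card_bool]; omega
    obtain ⟨a, b, hab, hfab⟩ :=
      Fintype.exists_ne_map_eq_of_card_lt (fun r : ι => decide (dir 0 r = 1)) hcard
    refine ⟨a, b, hab, ?_⟩
    rcases hdir 0 a with ha | ha <;> rcases hdir 0 b with hb | hb
    · rw [ha, hb]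
    · exfalso; rw [ha, hb] at hfab; simp at hfab
    · exfalso; rw [ha, hb] at hfab; simp at hfab
    · rw [ha, hb]
  obtain ⟨t1, h1⟩ := settle r
  obtain ⟨t2, h2⟩ := settle r'
  exact hcon (max t1 t2) r r' hne
    (by rw [h1 _ (le_max_left t1 t2), h2 _ (le_max_right t1 t2), hdeq])
end
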